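/- arXiv:1501.01492 — 5 statements merged into one kernel-verified Lean document; each statement's English description precedes it below -/
import Mathlib

section
/- Let T(x) be the formal power series satisfying T(x)/x = 1 + x*(T(x)/x)^3 with T having zero constant term and [x^1]T = 1 (the generating function of tree chord diagrams). Then for positive integers m ≤ n, the coefficient of x^n in T(x)^m equals sum_{k=0}^{m} C(m,k) * (k/(n-m)) * C(3(n-m), n-m-k) when m < n, and equals 1 when m = n. -/
/-!
Write `T = X u`; the equation becomes `u = 1 + X u³` and `[xⁿ] Tᵐ = [x^(n-m)] uᵐ`. For
`u = 1 + X u^p`, expanding `uᵐ = (1 + X u^p)ᵐ` binomially gives `[x^N] uᵐ = ∑ₖ C(m,k) [x^(N-k)] u^(pk)`, which determines every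
coefficient by strong induction on `N`. The Raney numbers `m/N · C(pN+m-1, N-1)` satisfy this
recursion by Chu–Vandermonde, and the right-hand side of the recursion, evaluated on them, is
exactly the sum in the theorem.
-/

open Finset PowerSeries

theorem Nat.sum_antidiagonal_mul_choose_mul_choose (m M N : ℕ) :
    ∑ ij ∈ antidiagonal (N + 1), ij.1 * m.choose ij.1 * M.choose ij.2
      = m * (M + m - 1).choose N := by
  rw [Nat.sum_antidiagonal_succ]
  cases m with
  | zero => simp
  | succ m =>
    simp only [zero_mul, zero_add, Nat.add_succ_sub_one]
    rw [add_comm M m, Nat.add_choose_eq, mul_sum]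
    refine sum_congr rfl fun ij _ => ?_
    rw [mul_comm (ij.1 + 1), ← Nat.add_one_mul_choose_eq, mul_assoc]

theorem sum_choose_mul_div_mul_choose (m M : ℕ) {N : ℕ} (hN : N ≠ 0) :
    ∑ k ∈ range (m + 1), (if k ≤ N then (m.choose k : ℚ) * (k / N) * M.choose (N - k) else 0)
      = m / N * (M + m - 1).choose (N - 1) := by
  have hsupport : ∑ k ∈ (range (m + 1)).filter (· ≤ N), (m.choose k : ℚ) * (k / N) * M.choose (N - k)
      = ∑ k ∈ range (N + 1), (m.choose k : ℚ) * (k / N) * M.choose (N - k) := by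
    refine sum_subset (fun k => by simp only [mem_filter, mem_range]; omega) fun k hk hk' => ?_
    have hmk : m < k := by simp only [mem_filter, mem_range, not_and] at hk hk'; omega
    simp [Nat.choose_eq_zero_of_lt hmk]
  obtain ⟨N, rfl⟩ := Nat.exists_eq_add_one_of_ne_zero hN
  rw [← sum_filter, hsupport, ← Nat.sum_antidiagonal_eq_sum_range_succ
    (fun i j => (m.choose i : ℚ) * (i / (N + 1 : ℕ)) * M.choose j), Nat.add_sub_cancel,
    div_mul_eq_mul_div, ← Nat.cast_mul, ← Nat.sum_antidiagonal_mul_choose_mul_choose,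
    Nat.cast_sum, sum_div]
  refine sum_congr rfl fun ij _ => ?_
  push_cast
  ring

/-- The Raney number `m/(pN+m) · C(pN+m, N)`, written so as to avoid the junk value at `N = m = 0`. -/
noncomputable def raney (p m N : ℕ) : ℚ :=
  if N = 0 then 1 else m / N * (p * N + m - 1).choose (N - 1)

theorem raney_mul_sub (p : ℕ) {k N : ℕ} (hk : k ≤ N) (hN : N ≠ 0) :
    raney p (p * k) (N - k) = k / N * (p * N).choose (N - k) := by
  rcases hk.eq_or_lt with rfl | hlt
  · simp [raney, hN]
  have hNk : N - k ≠ 0 := by omega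
  have hpN : p * (N - k) + p * k - 1 = p * N - 1 := by rw [← mul_add, Nat.sub_add_cancel hk]
  have hchoose : (N - k) * (p * N).choose (N - k) = p * N * (p * N - 1).choose (N - k - 1) := by
    obtain ⟨j, hj⟩ := Nat.exists_eq_add_one_of_ne_zero hNk
    rw [hj, Nat.add_sub_cancel]
    cases p * N with
    | zero => simp
    | succ P => rw [Nat.add_sub_cancel, mul_comm, Nat.add_one_mul_choose_eq]
  have hN' : (N : ℚ) ≠ 0 := by exact_mod_cast hN
  have hNk' : ((N - k : ℕ) : ℚ) ≠ 0 := by exact_mod_cast hNk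
  rw [raney, if_neg hNk, hpN, div_mul_eq_mul_div, div_mul_eq_mul_div, div_eq_div_iff hNk' hN']
  have := congrArg (Nat.cast : ℕ → ℚ) hchoose
  push_cast at this ⊢
  linear_combination (-k : ℚ) * this

theorem coeff_pow_eq_raney {p : ℕ} {u : ℚ⟦X⟧} (hu : u = X * u ^ p + 1) (m N : ℕ) :
    coeff N (u ^ m) = raney p m N := by
  induction N using Nat.strong_induction_on generalizing m with
  | _ N ih =>
  rcases eq_or_ne N 0 with rfl | hN
  · have hu0 : constantCoeff u = 1 := by rw [hu]; simp
    simp [raney, coeff_zero_eq_constantCoeff, hu0]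
  have hterm (k : ℕ) : coeff N (X ^ k * u ^ (p * k))
      = if k ≤ N then (k / N * (p * N).choose (N - k) : ℚ) else 0 := by
    rw [coeff_X_pow_mul']
    split_ifs with hkN
    · rcases eq_or_ne k 0 with rfl | hk0
      · simp [coeff_one, hN]
      · rw [ih (N - k) (by omega), raney_mul_sub p hkN hN]
    · rfl
  have hexpand : u ^ m = ∑ k ∈ range (m + 1), X ^ k * u ^ (p * k) * C (m.choose k : ℚ) := by
    conv_lhs => rw [hu, add_pow]
    refine sum_congr rfl fun k _ => ?_
    rw [one_pow, mul_one, mul_pow, ← pow_mul, map_natCast]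
  simp only [hexpand, map_sum, coeff_mul_C, hterm, ite_mul, zero_mul]
  rw [raney, if_neg hN, ← sum_choose_mul_div_mul_choose m (p * N) hN]
  refine sum_congr rfl fun k _ => ?_
  split_ifs <;> ring

theorem stmt4_general (T : PowerSeries ℚ) (h0 : PowerSeries.constantCoeff T = 0)
    (hT : PowerSeries.X * T = PowerSeries.X ^ 2 + T ^ 3) :
    ∀ n m : ℕ, 1 ≤ m → m ≤ n →
      (m < n →
        PowerSeries.coeff n (T ^ m)
          = ∑ k ∈ Finset.range (m + 1),
              if k ≤ n - m then
                (m.choose k : ℚ) * ((k : ℚ) / ((n : ℚ) - m))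
                  * ((3 * (n - m)).choose (n - m - k) : ℚ)
              else 0) ∧
      (m = n → PowerSeries.coeff n (T ^ m) = 1) := by
  obtain ⟨u, rfl⟩ := X_dvd_iff.2 h0
  have hu : u = X * u ^ 3 + 1 := by
    refine mul_left_cancel₀ (pow_ne_zero 2 X_ne_zero) ?_
    linear_combination hT
  have hcoeff (n m : ℕ) (hmn : m ≤ n) : coeff n ((X * u) ^ m) = raney 3 m (n - m) := by
    rw [mul_pow, coeff_X_pow_mul', if_pos hmn, coeff_pow_eq_raney hu]
  intro n m _ hmn
  refine ⟨fun hlt => ?_, ?_⟩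
  · rw [hcoeff n m hmn, ← Nat.cast_sub hmn, sum_choose_mul_div_mul_choose m _ (by omega), raney,
      if_neg (by omega)]
  · rintro rfl
    rw [hcoeff m m le_rfl, Nat.sub_self, raney, if_pos rfl]

/-- Let `T ∈ ℚ⟦X⟧` be the generating function of tree chord diagrams:
`T(0) = 0`, `[x^1]T = 1`, and `T/x = 1 + x (T/x)^3`, the latter encoded
equivalently (multiplying by `x`) as `X * T = X^2 + T^3`. Then for positive
integers `m ≤ n`,
`[x^n] T^m = ∑_{k=0}^{m} C(m,k) (k/(n-m)) C(3(n-m), n-m-k)` when `m < n`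
(the `k = 0` term is `0`, and binomials with negative lower index are `0`,
encoded by the `if` guard), and `[x^n] T^m = 1` when `m = n`. -/
theorem stmt4 (T : PowerSeries ℚ) (h0 : PowerSeries.constantCoeff T = 0)
    (h1 : PowerSeries.coeff 1 T = 1)
    (hT : PowerSeries.X * T = PowerSeries.X ^ 2 + T ^ 3) :
    ∀ n m : ℕ, 1 ≤ m → m ≤ n →
      (m < n →
        PowerSeries.coeff n (T ^ m)
          = ∑ k ∈ Finset.range (m + 1),
              if k ≤ n - m then
                (m.choose k : ℚ) * ((k : ℚ) / ((n : ℚ) - m))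
                  * ((3 * (n - m)).choose (n - m - k) : ℚ)
              else 0) ∧
      (m = n → PowerSeries.coeff n (T ^ m) = 1) :=
  stmt4_general T h0 hT
end

section
/- For positive integers n and m with m < n, (1/m) * C(2n, m-1) * sum_{k=1}^{m} C(m,k) * (k/(n-m)) * C(3(n-m), n-m-k) = (1/(n-m)) * C(2n, m-1) * C(3n-2m-1, n-m-1). -/
/-!
Writing `N = n - m`, the sum is `(1/N) ∑ₖ k C(m,k) C(3N, N-k)`. The absorption identity
`k C(m,k) = m C(m-1,k-1)` turns this into a Vandermonde convolution, which sums to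
`m C(m-1+3N, N-1) = m C(3n-2m-1, n-m-1)`.
-/

open Finset

theorem sum_range_mul_choose_mul_choose (M r n : ℕ) :
    ∑ k ∈ range (n + 2), k * (M + 1).choose k * r.choose (n + 1 - k)
      = (M + 1) * (M + r).choose n := by
  rw [sum_range_succ', Nat.add_choose_eq M r, Nat.sum_antidiagonal_eq_sum_range_succ_mk, mul_sum]
  simp only [zero_mul, add_zero, Nat.add_sub_add_right]
  refine sum_congr rfl fun j _ => ?_
  rw [mul_comm (j + 1), ← Nat.add_one_mul_choose_eq, mul_assoc]

theorem sum_Icc_ite_le_eq_sum_range {R : Type*} [AddCommMonoid R] (g : ℕ → R) (m N : ℕ)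
    (h0 : g 0 = 0) (hm : ∀ k, m < k → g k = 0) :
    ∑ k ∈ Icc 1 m, (if k ≤ N then g k else 0) = ∑ k ∈ range (N + 1), g k := by
  rw [← sum_filter]
  refine sum_subset (fun k hk => ?_) (fun k hkN hk => ?_)
  · simp only [mem_filter, mem_Icc] at hk
    exact mem_range.2 (by omega)
  · rw [mem_range] at hkN
    simp only [mem_filter, mem_Icc, not_and] at hk
    obtain rfl | hk0 := Nat.eq_zero_or_pos k
    · exact h0
    · exact hm k (by_contra fun hkm => hk ⟨hk0, not_lt.1 hkm⟩ (by omega))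

/-- Final computation in the proof of Theorem 1: for positive integers `m < n`,
`(1/m) C(2n, m-1) ∑_{k=1}^{m} C(m,k) (k/(n-m)) C(3(n-m), n-m-k)
  = (1/(n-m)) C(2n, m-1) C(3n-2m-1, n-m-1)`,
where binomial coefficients with negative lower index are `0` (encoded by the
`if k ≤ n - m` guard, since `ℕ`-subtraction truncates). -/
theorem stmt14 (n m : ℕ) (hm : 1 ≤ m) (hmn : m < n) :
    (1 / (m : ℚ)) * ((2 * n).choose (m - 1) : ℚ) *
      (∑ k ∈ Finset.Icc 1 m,
        if k ≤ n - m then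
          (m.choose k : ℚ) * ((k : ℚ) / ((n : ℚ) - m))
            * ((3 * (n - m)).choose (n - m - k) : ℚ)
        else 0)
    = (1 / ((n : ℚ) - m)) * ((2 * n).choose (m - 1) : ℚ)
        * ((3 * n - 2 * m - 1).choose (n - m - 1) : ℚ) := by
  obtain ⟨M, rfl⟩ : ∃ M, m = M + 1 := ⟨m - 1, by omega⟩
  obtain ⟨K, hK⟩ : ∃ K, n - (M + 1) = K + 1 := ⟨n - M - 2, by omega⟩
  have hcast : (n : ℚ) - (M + 1 : ℕ) = (K + 1 : ℕ) := by
    rw [← hK, Nat.cast_sub hmn.le]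
  have hsum : (∑ k ∈ Icc 1 (M + 1), if k ≤ K + 1 then
        ((M + 1).choose k : ℚ) * ((k : ℚ) / (K + 1 : ℕ)) * ((3 * (K + 1)).choose (K + 1 - k) : ℚ)
        else 0)
      = (((M + 1) * (M + 3 * (K + 1)).choose K : ℕ) : ℚ) / (K + 1 : ℕ) := by
    rw [sum_Icc_ite_le_eq_sum_range _ _ _ (by simp) fun k hk => by simp [Nat.choose_eq_zero_of_lt hk],
      ← sum_range_mul_choose_mul_choose, Nat.cast_sum, sum_div]
    refine sum_congr rfl fun k _ => ?_
    push_cast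
    ring
  rw [hcast, hK, hsum, Nat.add_sub_cancel, Nat.add_sub_cancel,
    show 3 * n - 2 * (M + 1) - 1 = M + 3 * (K + 1) by omega]
  push_cast
  field_simp
end

section
/- Let T ∈ ℚ[[x]] satisfy x*T = x^2 + T^3, T(0)=0, [x]T = 1, and set R = x*T'. Then for positive integers m ≤ n, [x^n] R^m = [x^{n-m}] ((2x - T)/(x - 3T^2))^m, where (2x-T)/x and (x-3T^2)/x are power series with invertible constant terms so the quotient is well-defined. -/
open PowerSeries

/-! Differentiating `x T = x² + T³` gives `T' (x - 3T²) = 2x - T`, so `T' = P Q⁻¹` and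
`R^m = x^m (P Q⁻¹)^m`; the claim is the resulting shift of coefficients. -/

section

variable {R : Type*}

theorem coeff_X_mul_pow_of_le [CommSemiring R] (f : R⟦X⟧) {m n : ℕ} (h : m ≤ n) :
    coeff n ((X * f) ^ m) = coeff (n - m) (f ^ m) := by
  obtain ⟨k, rfl⟩ := Nat.exists_eq_add_of_le' h
  rw [mul_pow, coeff_X_pow_mul, Nat.add_sub_cancel]

variable [CommRing R]

theorem constantCoeff_eq_one_of_X_mul_eq_X_sub_mul_sq {T Q : R⟦X⟧} (c : R⟦X⟧)
    (h0 : constantCoeff T = 0) (hQ : X * Q = X - c * T ^ 2) : constantCoeff Q = 1 := by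
  obtain ⟨U, rfl⟩ := X_dvd_iff.mpr h0
  rw [← coeff_zero_eq_constantCoeff_apply, ← coeff_succ_X_mul, hQ, map_sub, mul_pow,
    mul_left_comm, coeff_X_pow_mul']
  simp

theorem derivative_mul_X_sub_three_mul_sq {T : R⟦X⟧} (hT : X * T = X ^ 2 + T ^ 3) :
    derivative R T * (X - 3 * T ^ 2) = 2 * X - T := by
  have h := congrArg (derivative R) hT
  simp only [Derivation.leibniz, Derivation.leibniz_pow, map_add, derivative_X, smul_eq_mul,
    nsmul_eq_mul] at h
  push_cast at h
  linear_combination h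

end

theorem derivative_eq_mul_inv_of_X_mul_eq {k : Type*} [Field k] {T P Q : k⟦X⟧}
    (h0 : constantCoeff T = 0) (hT : X * T = X ^ 2 + T ^ 3)
    (hP : X * P = 2 * X - T) (hQ : X * Q = X - 3 * T ^ 2) :
    derivative k T = P * Q⁻¹ := by
  have hQ0 : constantCoeff Q = 1 := constantCoeff_eq_one_of_X_mul_eq_X_sub_mul_sq 3 h0 hQ
  rw [eq_mul_inv_iff_mul_eq (by simp [hQ0])]
  apply mul_left_cancel₀ X_ne_zero
  rw [mul_left_comm, hQ, hP, derivative_mul_X_sub_three_mul_sq hT]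

theorem stmt15_general (T : PowerSeries ℚ) (h0 : PowerSeries.constantCoeff T = 0)
    (hT : PowerSeries.X * T = PowerSeries.X ^ 2 + T ^ 3)
    (R : PowerSeries ℚ) (hR : R = PowerSeries.X * PowerSeries.derivative ℚ T)
    (P Q : PowerSeries ℚ)
    (hP : PowerSeries.X * P = 2 * PowerSeries.X - T)
    (hQ : PowerSeries.X * Q = PowerSeries.X - 3 * T ^ 2) :
    ∀ n m : ℕ, 1 ≤ m → m ≤ n →
      PowerSeries.coeff n (R ^ m) = PowerSeries.coeff (n - m) ((P * Q⁻¹) ^ m) := by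
  intro n m _ hmn
  rw [hR, derivative_eq_mul_inv_of_X_mul_eq h0 hT hP hQ, coeff_X_mul_pow_of_le _ hmn]

/-- Let `T ∈ ℚ⟦x⟧` satisfy `x*T = x^2 + T^3`, `T(0) = 0`, `[x]T = 1`, and set
`R = x*T'`. Write `P = (2x - T)/x` and `Q = (x - 3T^2)/x` (both well-defined
power series, encoded by `x*P = 2x - T` and `x*Q = x - 3T^2`; `Q` has constant
term `1`, hence is invertible). Then for positive integers `m ≤ n`,
`[x^n] R^m = [x^{n-m}] ((2x-T)/(x-3T^2))^m = [x^{n-m}] (P * Q⁻¹)^m`. -/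
theorem stmt15 (T : PowerSeries ℚ) (h0 : PowerSeries.constantCoeff T = 0)
    (h1 : PowerSeries.coeff 1 T = 1)
    (hT : PowerSeries.X * T = PowerSeries.X ^ 2 + T ^ 3)
    (R : PowerSeries ℚ) (hR : R = PowerSeries.X * PowerSeries.derivative ℚ T)
    (P Q : PowerSeries ℚ)
    (hP : PowerSeries.X * P = 2 * PowerSeries.X - T)
    (hQ : PowerSeries.X * Q = PowerSeries.X - 3 * T ^ 2) :
    ∀ n m : ℕ, 1 ≤ m → m ≤ n →
      PowerSeries.coeff n (R ^ m) = PowerSeries.coeff (n - m) ((P * Q⁻¹) ^ m) :=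
  stmt15_general T h0 hT R hR P Q hP hQ
end

section
/- For positive integers n, m with m < n, the number f(n,m) = (1/(n-m)) * C(2n, m-1) * C(3n-2m-1, n-m-1) is a positive integer. -/
/-!
Write `d = n - m`, `A = C(2n, m-1)` and `B = C(3n-2m-1, d-1)`. The identity
`(k+1) C(N, k+1) = (N-k) C(N, k)` gives `d ∣ (m + 2d) B`, hence `d ∣ m B`, and `m ∣ (m + 2d + 1) A`.
Multiplying out, `d` divides both `m A B` and `(m + 2d + 1) A B`, hence `(2d + 1) A B`;
as `d` is coprime to `2d + 1`, it divides `A B`.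
-/

theorem Nat.succ_dvd_sub_mul_choose (N k : ℕ) : k + 1 ∣ (N - k) * N.choose k :=
  Dvd.intro_left _ <| by rw [Nat.choose_succ_right_eq, mul_comm]

theorem Nat.dvd_mul_of_dvd_mul_of_dvd_add_mul {d m t a b : ℕ} (hb : d ∣ m * b)
    (ha : m ∣ (m + t) * a) (hdt : d.Coprime t) : d ∣ a * b := by
  obtain ⟨c, hc⟩ := ha
  have hsum : d ∣ m * (a * b) + t * (a * b) := by
    have : m * (a * b) + t * (a * b) = c * (m * b) := by
      rw [← add_mul, ← mul_assoc, hc]; ring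
    exact this ▸ dvd_mul_of_dvd_right hb c
  have hmab : d ∣ m * (a * b) := by
    rw [mul_left_comm]; exact dvd_mul_of_dvd_right hb a
  exact hdt.dvd_of_dvd_mul_left ((Nat.dvd_add_right hmab).mp hsum)

theorem sub_dvd_choose_mul_choose (n m : ℕ) (hm : 1 ≤ m) (hmn : m < n) :
    n - m ∣ (2 * n).choose (m - 1) * (3 * n - 2 * m - 1).choose (n - m - 1) := by
  set d := n - m
  have hB : d ∣ (m + 2 * d) * (3 * n - 2 * m - 1).choose (n - m - 1) := by
    have h := Nat.succ_dvd_sub_mul_choose (3 * n - 2 * m - 1) (n - m - 1)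
    rwa [show n - m - 1 + 1 = d by omega,
      show 3 * n - 2 * m - 1 - (n - m - 1) = m + 2 * d by omega] at h
  have hA : m ∣ (m + (2 * d + 1)) * (2 * n).choose (m - 1) := by
    have h := Nat.succ_dvd_sub_mul_choose (2 * n) (m - 1)
    rwa [show m - 1 + 1 = m by omega,
      show 2 * n - (m - 1) = m + (2 * d + 1) by omega] at h
  have hB' : d ∣ m * (3 * n - 2 * m - 1).choose (n - m - 1) := by
    rw [add_mul, mul_assoc] at hB
    exact (Nat.dvd_add_left (dvd_mul_of_dvd_right (dvd_mul_right d _) 2)).mp hB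
  have hcop : d.Coprime (2 * d + 1) := by simp
  exact Nat.dvd_mul_of_dvd_mul_of_dvd_add_mul hB' hA hcop

/-- For positive integers `m < n`, the number
`f(n,m) = (1/(n-m)) * C(2n, m-1) * C(3n-2m-1, n-m-1)` is a positive integer. -/
theorem stmt16 (n m : ℕ) (hm : 1 ≤ m) (hmn : m < n) :
    ∃ N : ℕ, 0 < N ∧
      (N : ℚ) = (1 / ((n : ℚ) - m)) * ((2 * n).choose (m - 1) : ℚ)
          * ((3 * n - 2 * m - 1).choose (n - m - 1) : ℚ) := by
  obtain ⟨N, hN⟩ := sub_dvd_choose_mul_choose n m hm hmn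
  have hA : 0 < (2 * n).choose (m - 1) := Nat.choose_pos (by omega)
  have hB : 0 < (3 * n - 2 * m - 1).choose (n - m - 1) := Nat.choose_pos (by omega)
  refine ⟨N, Nat.pos_of_mul_pos_left (hN ▸ Nat.mul_pos hA hB), ?_⟩
  have hd : ((n - m : ℕ) : ℚ) = n - m := Nat.cast_sub hmn.le
  have hd0 : (n : ℚ) - m ≠ 0 := sub_ne_zero.mpr (by exact_mod_cast hmn.ne')
  rw [mul_assoc, ← Nat.cast_mul, hN, Nat.cast_mul, hd]
  field_simp
end

section
/- Let z ∈ ℚ[[x]] with z(0)=0 satisfy z = x(1+z)^3. Then for every k ≥ 1 and n > k, the coefficient of x^n in z^k equals (k/n) * [u^{n-k}] (1+u)^{3n}, i.e., (k/n) * C(3n, n-k). -/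
/-!
Write `z ^ k = X ^ k * (1 + z) ^ (d * k)` and expand the binomial: since `X ∣ z`, the coefficient
of `X ^ (m + k)` in `z ^ k` is `∑_{i ≤ m} C(dk, i) [X^m] z ^ i`. Strong induction on `m`, with the
claim in the division-free form `(m + k) [X^(m+k)] z^k = k C(d(m+k), m)`, then reduces everything to
the weighted Vandermonde identity `(a + b) ∑ i C(a, i) C(b, m - i) = a m C(a + b, m)`.
-/

open PowerSeries Finset

theorem Nat.add_mul_sum_mul_choose_mul_choose (a b m : ℕ) :
    (a + b) * ∑ i ∈ range (m + 1), i * a.choose i * b.choose (m - i)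
      = a * m * (a + b).choose m := by
  obtain _ | a := a
  · have hzero : ∀ i, i * (0 : ℕ).choose i = 0 := fun i => by cases i <;> simp
    simp [hzero]
  obtain _ | m := m
  · simp
  have hshift : ∑ i ∈ range (m + 2), i * (a + 1).choose i * b.choose (m + 1 - i)
      = (a + 1) * (a + b).choose m := by
    rw [sum_range_succ', Nat.add_choose_eq a b m, Nat.sum_antidiagonal_eq_sum_range_succ_mk,
      mul_sum]
    simp only [Nat.succ_sub_succ, zero_mul, add_zero]
    exact sum_congr rfl fun i _ => by rw [mul_comm (i + 1), ← Nat.add_one_mul_choose_eq]; ring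
  rw [hshift, mul_left_comm, add_right_comm, Nat.add_one_mul_choose_eq]
  ring

theorem PowerSeries.coeff_one_add_pow_of_X_dvd {R : Type*} [CommRing R] {z : R⟦X⟧}
    (hz : X ∣ z) (N m : ℕ) :
    coeff m ((1 + z) ^ N) = ∑ i ∈ range (m + 1), (N.choose i : R) * coeff m (z ^ i) := by
  have hvanish : ∀ i, m < i → coeff m (z ^ i) = 0 := fun i hi =>
    X_pow_dvd_iff.mp (pow_dvd_pow_of_dvd hz i) m hi
  calc coeff m ((1 + z) ^ N)
      = ∑ i ∈ range (N + 1), (N.choose i : R) * coeff m (z ^ i) := by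
        simp only [add_comm (1 : R⟦X⟧), add_pow, one_pow, mul_one, map_sum]
        refine sum_congr rfl fun i _ => ?_
        rw [← map_natCast (C (R := R)), coeff_mul_C, mul_comm]
    _ = ∑ i ∈ range (m + N + 1), (N.choose i : R) * coeff m (z ^ i) :=
        sum_subset (range_subset_range.2 (by omega)) fun i _ hi => by
          simp [Nat.choose_eq_zero_of_lt (show N < i by simpa using hi)]
    _ = ∑ i ∈ range (m + 1), (N.choose i : R) * coeff m (z ^ i) :=
        (sum_subset (range_subset_range.2 (by omega)) fun i _ hi => by
          simp [hvanish i (by simpa using hi)]).symm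

theorem PowerSeries.coeff_add_pow_of_eq_X_mul_one_add_pow {R : Type*} [CommRing R] {d : ℕ}
    {z : R⟦X⟧} (hz : z = X * (1 + z) ^ d) (m k : ℕ) :
    coeff (m + k) (z ^ k) = ∑ i ∈ range (m + 1), ((d * k).choose i : R) * coeff m (z ^ i) := by
  have hpow : z ^ k = X ^ k * (1 + z) ^ (d * k) := by
    conv_lhs => rw [hz]
    rw [mul_pow, ← pow_mul]
  rw [hpow, coeff_X_pow_mul, coeff_one_add_pow_of_X_dvd ⟨_, hz⟩]

theorem PowerSeries.natCast_mul_coeff_pow_of_eq_X_mul_one_add_pow {R : Type*} [CommRing R]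
    [IsDomain R] [CharZero R] {d : ℕ} (hd : d ≠ 0) {z : R⟦X⟧} (hz : z = X * (1 + z) ^ d)
    (m k : ℕ) :
    ((m + k : ℕ) : R) * coeff (m + k) (z ^ k) = k * (d * (m + k)).choose m := by
  induction m using Nat.strong_induction_on generalizing k with
  | _ m ih =>
  obtain rfl | hm := Nat.eq_zero_or_pos m
  · have hk := coeff_add_pow_of_eq_X_mul_one_add_pow hz 0 k
    rw [zero_add] at hk
    simp [hk]
  have hterm : ∀ i ∈ range (m + 1),
      ((d * k).choose i : R) * ((m : R) * coeff m (z ^ i))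
        = ((i * (d * k).choose i * (d * m).choose (m - i) : ℕ) : R) := by
    intro i hi
    obtain rfl | hi0 := Nat.eq_zero_or_pos i
    · simp [coeff_one, hm.ne']
    · have := ih (m - i) (by omega) i
      rw [Nat.sub_add_cancel (mem_range_succ_iff.1 hi)] at this
      rw [this]
      push_cast
      ring
  have hsum : (m : R) * coeff (m + k) (z ^ k)
      = ((∑ i ∈ range (m + 1), i * (d * k).choose i * (d * m).choose (m - i) : ℕ) : R) := by
    rw [coeff_add_pow_of_eq_X_mul_one_add_pow hz, mul_sum, Nat.cast_sum]
    exact sum_congr rfl fun i hi => by rw [mul_left_comm, hterm i hi]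
  have hdm : ((d * m : ℕ) : R) ≠ 0 := Nat.cast_ne_zero.2 (mul_ne_zero hd hm.ne')
  apply mul_left_cancel₀ hdm
  calc ((d * m : ℕ) : R) * (((m + k : ℕ) : R) * coeff (m + k) (z ^ k))
      = ((d * (m + k) : ℕ) : R) * ((m : R) * coeff (m + k) (z ^ k)) := by push_cast; ring
    _ = ((d * k * m * (d * k + d * m).choose m : ℕ) : R) := by
        rw [hsum, ← Nat.cast_mul, add_comm m k, mul_add, Nat.add_mul_sum_mul_choose_mul_choose]
    _ = ((d * m : ℕ) : R) * (k * (d * (m + k)).choose m) := by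
        rw [mul_add, add_comm (d * m)]; push_cast; ring

theorem stmt18_general (z : PowerSeries ℚ)
    (hz : z = PowerSeries.X * (1 + z) ^ 3) :
    ∀ k n : ℕ, 1 ≤ k → k < n →
      PowerSeries.coeff n (z ^ k)
        = ((k : ℚ) / (n : ℚ)) * ((3 * n).choose (n - k) : ℚ) := by
  intro k n _ hkn
  have h := natCast_mul_coeff_pow_of_eq_X_mul_one_add_pow three_ne_zero hz (n - k) k
  rw [Nat.sub_add_cancel hkn.le] at h
  have hn : (n : ℚ) ≠ 0 := Nat.cast_ne_zero.2 (by omega)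
  rw [div_mul_eq_mul_div, eq_div_iff hn, ← h, mul_comm]

/-- Lagrange inversion for the ternary-tree equation: let `z ∈ ℚ⟦x⟧` with
`z(0) = 0` satisfy `z = x(1+z)^3`. Then for `k ≥ 1` and `n > k`,
`[x^n] z^k = (k/n) * C(3n, n-k)`. -/
theorem stmt18 (z : PowerSeries ℚ) (h0 : PowerSeries.constantCoeff z = 0)
    (hz : z = PowerSeries.X * (1 + z) ^ 3) :
    ∀ k n : ℕ, 1 ≤ k → k < n →
      PowerSeries.coeff n (z ^ k)
        = ((k : ℚ) / (n : ℚ)) * ((3 * n).choose (n - k) : ℚ) :=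
  stmt18_general z hz
end
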